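/- arXiv:1606.02958 — 2 statements merged into one kernel-verified Lean document; each statement's English description precedes it below -/
import Mathlib

section
/- Let 0 < ε < 1/3 and let B = (U ∪ W, E) be an ε-regular bipartite graph. Then every spanning subgraph B' = (U ∪ W, E') of B with E' ⊆ E and |E \ E'| ≤ ε⁴|E| is 2ε-regular. -/
/-!
Write `D` for the deleted edges, `d` for the density of `E` on `U × W` and take `A' ⊆ U`,
`B' ⊆ W` of relative sizes at least `2ε`. Globally `D` has density at most `ε⁴ d`; on `A' × B'`,
which covers at least a `4ε²`-fraction of `U × W`, it has density at most `ε⁴ d / (4ε²) = ε² d / 4`.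
So passing from `E` to `E'` moves both densities by `O(ε² d)`, and the `ε d` deviation granted by
the `ε`-regularity of `E` stays below `2ε` times the new density `d' ≥ (1 - ε⁴) d` as long as
`ε < 1/3`.
-/

/-- Number of (ordered) pairs `(a,b) ∈ A × B` with `R a b`; for a bipartite graph between
disjoint sets this is the number of edges between `A` and `B`. -/
noncomputable def eCnt {V : Type*} (R : V → V → Prop) (A B : Set V) : ℕ :=
  Nat.card {x : V × V // x.1 ∈ A ∧ x.2 ∈ B ∧ R x.1 x.2}

/-- Edge density between `A` and `B`. -/
noncomputable def dens {V : Type*} (R : V → V → Prop) (A B : Set V) : ℝ :=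
  (eCnt R A B : ℝ) / ((Nat.card A : ℝ) * (Nat.card B : ℝ))

/-- The pair `(A,B)` is `(ε,p)`-regular. -/
def RegPair {V : Type*} (ε p : ℝ) (R : V → V → Prop) (A B : Set V) : Prop :=
  ∀ A' ⊆ A, ∀ B' ⊆ B, ε * Nat.card A ≤ (Nat.card A' : ℝ) → ε * Nat.card B ≤ (Nat.card B' : ℝ) →
    |dens R A' B' - dens R A B| ≤ ε * p

/-- The pair `(A,B)` is `ε`-regular, i.e. `(ε,d)`-regular with `d` its density. -/
def EpsReg {V : Type*} (ε : ℝ) (R : V → V → Prop) (A B : Set V) : Prop :=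
  RegPair ε (dens R A B) R A B

/-- The pair `(A,B)` is `(ε,p)`-lower-regular. -/
def LowerReg {V : Type*} (ε p : ℝ) (R : V → V → Prop) (A B : Set V) : Prop :=
  ∀ A' ⊆ A, ∀ B' ⊆ B, ε * Nat.card A ≤ (Nat.card A' : ℝ) → ε * Nat.card B ≤ (Nat.card B' : ℝ) →
    (1 - ε) * p ≤ dens R A' B'

section Density

variable {V : Type*}

lemma dens_nonneg (R : V → V → Prop) (A B : Set V) : 0 ≤ dens R A B := by
  unfold dens
  positivity

lemma dens_le_mul_dens_of_eCnt_le {R S : V → V → Prop} {A B : Set V} {c : ℝ}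
    (h : (eCnt R A B : ℝ) ≤ c * eCnt S A B) : dens R A B ≤ c * dens S A B := by
  unfold dens
  rw [mul_div_assoc']
  exact div_le_div_of_nonneg_right h (by positivity)

lemma RegPair.of_le {ε ε' p : ℝ} {R : V → V → Prop} {A B A' B' : Set V}
    (h : RegPair ε p R A B) (hε : ε ≤ ε') (hA : A' ⊆ A) (hB : B' ⊆ B)
    (hA' : ε' * Nat.card A ≤ (Nat.card A' : ℝ)) (hB' : ε' * Nat.card B ≤ (Nat.card B' : ℝ)) :
    |dens R A' B' - dens R A B| ≤ ε * p :=
  h A' hA B' hB (le_trans (by gcongr) hA') (le_trans (by gcongr) hB')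

variable [Finite V]

lemma eCnt_mono (R : V → V → Prop) {A B A' B' : Set V} (hA : A' ⊆ A) (hB : B' ⊆ B) :
    eCnt R A' B' ≤ eCnt R A B :=
  Nat.card_mono (s := {x : V × V | x.1 ∈ A' ∧ x.2 ∈ B' ∧ R x.1 x.2}) (Set.toFinite _)
    fun _ hx => ⟨hA hx.1, hB hx.2.1, hx.2.2⟩

lemma eCnt_add_eCnt_diff {E E' : V → V → Prop} (hsub : ∀ u w, E' u w → E u w) (A B : Set V) :
    eCnt E' A B + eCnt (fun u w => E u w ∧ ¬ E' u w) A B = eCnt E A B := by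
  refine Eq.trans ?_ (Set.ncard_inter_add_ncard_sdiff_eq_ncard
    {x : V × V | x.1 ∈ A ∧ x.2 ∈ B ∧ E x.1 x.2} {x | E' x.1 x.2})
  congr 1 <;> unfold eCnt <;> congr <;> ext x
  · exact ⟨fun ⟨hA, hB, h⟩ => ⟨⟨hA, hB, hsub _ _ h⟩, h⟩, fun ⟨⟨hA, hB, _⟩, h⟩ => ⟨hA, hB, h⟩⟩
  · simp [and_assoc]

lemma dens_add_dens_diff {E E' : V → V → Prop} (hsub : ∀ u w, E' u w → E u w) (A B : Set V) :
    dens E' A B + dens (fun u w => E u w ∧ ¬ E' u w) A B = dens E A B := by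
  simp only [dens, ← eCnt_add_eCnt_diff hsub A B, Nat.cast_add, add_div]

lemma dens_le_dens_div_sq (R : V → V → Prop) {A B A' B' : Set V} {δ : ℝ} (hδ : 0 < δ)
    (hA : A' ⊆ A) (hB : B' ⊆ B) (hA' : δ * Nat.card A ≤ (Nat.card A' : ℝ))
    (hB' : δ * Nat.card B ≤ (Nat.card B' : ℝ)) :
    dens R A' B' ≤ dens R A B / δ ^ 2 := by
  by_cases h0 : (Nat.card A' : ℝ) * Nat.card B' = 0
  · simp only [dens, h0, div_zero]
    exact div_nonneg (dens_nonneg R A B) (sq_nonneg δ)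
  have hcard : (Nat.card A' : ℝ) * Nat.card B' ≤ (Nat.card A : ℝ) * Nat.card B := by
    gcongr
    exacts [Nat.card_mono (Set.toFinite _) hA, Nat.card_mono (Set.toFinite _) hB]
  have hAB : 0 < (Nat.card A : ℝ) * Nat.card B :=
    (lt_of_le_of_ne (by positivity) (Ne.symm h0)).trans_le hcard
  calc dens R A' B'
      ≤ eCnt R A B / (δ ^ 2 * ((Nat.card A : ℝ) * Nat.card B)) := by
        refine div_le_div₀ (by positivity) (by exact_mod_cast eCnt_mono R hA hB)
          (by positivity) ?_
        calc δ ^ 2 * ((Nat.card A : ℝ) * Nat.card B)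
            = (δ * Nat.card A) * (δ * Nat.card B) := by ring
          _ ≤ Nat.card A' * Nat.card B' := by gcongr
    _ = dens R A B / δ ^ 2 := by rw [dens, div_div, mul_comm]

end Density

lemma two_mul_one_sub_pow_four_ge {ε : ℝ} (hε : 0 < ε) (hε3 : ε < 1 / 3) :
    ε + ε ^ 2 / 4 + ε ^ 4 ≤ 2 * ε * (1 - ε ^ 4) := by
  have hsmall : ε / 4 + ε ^ 3 + 2 * ε ^ 4 ≤ 1 := by
    have h2 : ε ^ 2 ≤ 1 / 9 := by nlinarith
    nlinarith
  nlinarith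

theorem subgraph_regular_general {V : Type*} [Fintype V] (U W : Set V) (E E' : V → V → Prop)
    (ε : ℝ) (hε : 0 < ε) (hε3 : ε < 1 / 3)
    (hsub : ∀ u w, E' u w → E u w)
    (hreg : EpsReg ε E U W)
    (hdel : (eCnt (fun u w => E u w ∧ ¬ E' u w) U W : ℝ) ≤ ε ^ 4 * eCnt E U W) :
    EpsReg (2 * ε) E' U W := by
  intro A' hA' B' hB' hA hB
  set D : V → V → Prop := fun u w => E u w ∧ ¬ E' u w
  have hdelUW : dens D U W ≤ ε ^ 4 * dens E U W := dens_le_mul_dens_of_eCnt_le hdel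
  have hdelAB : dens D A' B' ≤ ε ^ 2 / 4 * dens E U W :=
    calc dens D A' B'
        ≤ dens D U W / (2 * ε) ^ 2 := dens_le_dens_div_sq D (by positivity) hA' hB' hA hB
      _ ≤ ε ^ 4 * dens E U W / (2 * ε) ^ 2 := by gcongr
      _ = ε ^ 2 / 4 * dens E U W := by field_simp; ring
  have hE : |dens E A' B' - dens E U W| ≤ ε * dens E U W :=
    hreg.of_le (by linarith) hA' hB' hA hB
  have hE'UW : dens E' U W = dens E U W - dens D U W :=
    eq_sub_of_add_eq (dens_add_dens_diff hsub U W)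
  have hE'AB : dens E' A' B' = dens E A' B' - dens D A' B' :=
    eq_sub_of_add_eq (dens_add_dens_diff hsub A' B')
  have hD : |dens D A' B' - dens D U W| ≤ (ε ^ 2 / 4 + ε ^ 4) * dens E U W :=
    abs_sub_le_iff.2 ⟨by linarith [dens_nonneg D U W], by linarith [dens_nonneg D A' B']⟩
  calc |dens E' A' B' - dens E' U W|
      = |(dens E A' B' - dens E U W) - (dens D A' B' - dens D U W)| := by
        rw [hE'AB, hE'UW]; ring_nf
    _ ≤ |dens E A' B' - dens E U W| + |dens D A' B' - dens D U W| := abs_sub _ _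
    _ ≤ (ε + ε ^ 2 / 4 + ε ^ 4) * dens E U W := by linarith
    _ ≤ 2 * ε * (1 - ε ^ 4) * dens E U W := by
        gcongr
        · exact dens_nonneg E U W
        · exact two_mul_one_sub_pow_four_ge hε hε3
    _ ≤ 2 * ε * dens E' U W := by
        rw [hE'UW, mul_assoc, one_sub_mul]
        gcongr

/-- Removing at most an `ε⁴`-fraction of the edges of an `ε`-regular bipartite graph
(`0 < ε < 1/3`) leaves a `2ε`-regular bipartite graph. -/
theorem subgraph_regular {V : Type*} [Fintype V] (U W : Set V) (E E' : V → V → Prop)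
    (ε : ℝ) (hε : 0 < ε) (hε3 : ε < 1 / 3) (hUW : Disjoint U W)
    (hsub : ∀ u w, E' u w → E u w)
    (hreg : EpsReg ε E U W)
    (hdel : (eCnt (fun u w => E u w ∧ ¬ E' u w) U W : ℝ) ≤ ε ^ 4 * eCnt E U W) :
    EpsReg (2 * ε) E' U W :=
  subgraph_regular_general U W E E' ε hε hε3 hsub hreg hdel
end

section
/- For every ε > 0 there exists a constant C > 0 such that for every edge probability p = p(n), asymptotically almost surely in G_{n,p} the following holds: every pair of disjoint vertex sets A, B with |A|·|B|·p ≥ C·log(n)·max{|A|, |B|} satisfies e(A, B) ≤ (1+ε)·|A|·|B|·p, where e(A,B) is the number of edges of G_{n,p} with one endpoint in A and the other in B. -/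
open Filter

/-- Number of edges of a graph on `Fin n`. -/
noncomputable def edgeCnt {n : ℕ} (G : SimpleGraph (Fin n)) : ℕ := Nat.card G.edgeSet

/-- Probability that the binomial random graph `G_{n,p}` lies in the set `A`. -/
noncomputable def gnpProb (n : ℕ) (p : ℝ) (A : Set (SimpleGraph (Fin n))) : ℝ :=
  ∑ G : SimpleGraph (Fin n),
    A.indicator (fun G => p ^ edgeCnt G * (1 - p) ^ (n.choose 2 - edgeCnt G)) G

/-- `Pr` holds asymptotically almost surely for `G_{n,p(n)}`. -/
def AAS (p : ℕ → ℝ) (Pr : (n : ℕ) → SimpleGraph (Fin n) → Prop) : Prop :=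
  Tendsto (fun n => gnpProb n (p n) {G | Pr n G}) atTop (nhds 1)

/-! ### Auxiliary machinery -/

namespace GnpAux
open Finset
open Classical

variable {n : ℕ}

/-- potential edges -/
abbrev PE (n : ℕ) := {q : Fin n × Fin n // q.1 < q.2}

noncomputable def gOfFun (f : PE n → Bool) : SimpleGraph (Fin n) where
  Adj a b := ∃ i : PE n, f i = true ∧ ((i.1.1 = a ∧ i.1.2 = b) ∨ (i.1.1 = b ∧ i.1.2 = a))
  symm := by
    refine ⟨?_⟩
    rintro a b ⟨i, hf, h | h⟩
    · exact ⟨i, hf, Or.inr h⟩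
    · exact ⟨i, hf, Or.inl h⟩
  loopless := by
    refine ⟨?_⟩
    rintro a ⟨i, hf, h | h⟩ <;>
      exact absurd (h.1.trans h.2.symm) i.2.ne

lemma gOfFun_adj (f : PE n → Bool) (i : PE n) :
    (gOfFun f).Adj i.1.1 i.1.2 ↔ f i = true := by
  constructor
  · rintro ⟨j, hf, ⟨h1, h2⟩ | ⟨h1, h2⟩⟩
    · have : j = i := Subtype.ext (Prod.ext h1 h2)
      exact this ▸ hf
    · exact absurd (h1 ▸ h2 ▸ j.2) (by have := i.2; omega)
  · intro hf
    exact ⟨i, hf, Or.inl ⟨rfl, rfl⟩⟩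

noncomputable def gEquiv : SimpleGraph (Fin n) ≃ (PE n → Bool) where
  toFun G := fun i => decide (G.Adj i.1.1 i.1.2)
  invFun := gOfFun
  left_inv := by
    intro G
    ext a b
    constructor
    · rintro ⟨i, hf, ⟨h1, h2⟩ | ⟨h1, h2⟩⟩
      · have := of_decide_eq_true hf
        rwa [h1, h2] at this
      · have := of_decide_eq_true hf
        rw [h1, h2] at this
        exact this.symm
    · intro hadj
      rcases lt_or_gt_of_ne (G.ne_of_adj hadj) with h | h
      · exact ⟨⟨(a, b), h⟩, decide_eq_true hadj, Or.inl ⟨rfl, rfl⟩⟩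
      · exact ⟨⟨(b, a), h⟩, decide_eq_true hadj.symm, Or.inr ⟨rfl, rfl⟩⟩
  right_inv := by
    intro f
    funext i
    rcases hf : f i with _ | _
    · exact decide_eq_false (fun h => by simp [(gOfFun_adj f i).mp h] at hf)
    · exact decide_eq_true ((gOfFun_adj f i).mpr hf)

lemma edgeCnt_eq (G : SimpleGraph (Fin n)) :
    edgeCnt G = Nat.card {i : PE n // G.Adj i.1.1 i.1.2} := by
  have hb : Function.Bijective
      (fun i : {i : PE n // G.Adj i.1.1 i.1.2} =>
        (⟨s(i.1.1.1, i.1.1.2), i.2⟩ : G.edgeSet)) := by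
    constructor
    · rintro ⟨⟨⟨a, b⟩, hab⟩, h1⟩ ⟨⟨⟨c, d⟩, hcd⟩, h2⟩ h
      replace h := Sym2.eq_iff.mp (congrArg Subtype.val h)
      rcases h with ⟨rfl, rfl⟩ | ⟨rfl, rfl⟩
      · rfl
      · exact (lt_asymm hab hcd).elim
    · rintro ⟨e, he⟩
      induction e with
      | _ x y =>
        rw [SimpleGraph.mem_edgeSet] at he
        rcases lt_or_gt_of_ne (G.ne_of_adj he) with h | h
        · exact ⟨⟨⟨(x, y), h⟩, he⟩, rfl⟩
        · exact ⟨⟨⟨(y, x), h⟩, he.symm⟩, Subtype.ext (Sym2.eq_swap)⟩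
  rw [edgeCnt, ← Nat.card_eq_of_bijective _ hb]

lemma card_PE : Fintype.card (PE n) = n.choose 2 := by
  rw [← Nat.card_eq_fintype_card]
  have e : PE n ≃ {i : PE n // (⊤ : SimpleGraph (Fin n)).Adj i.1.1 i.1.2} :=
    (Equiv.subtypeUnivEquiv fun i => (SimpleGraph.top_adj _ _).mpr i.2.ne).symm
  rw [Nat.card_congr e, ← edgeCnt_eq]
  rw [edgeCnt, Nat.card_eq_fintype_card, ← SimpleGraph.edgeFinset_card,
    SimpleGraph.card_edgeFinset_top_eq_card_choose_two, Fintype.card_fin]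

noncomputable def W (n : ℕ) (p : ℝ) (f : PE n → Bool) : ℝ :=
  ∏ i, (if f i then p else 1 - p)

lemma W_nonneg {p : ℝ} (hp0 : 0 ≤ p) (hp1 : p ≤ 1) (f : PE n → Bool) : 0 ≤ W n p f :=
  Finset.prod_nonneg fun i _ => by split <;> linarith

lemma sum_prod_bool {ι : Type*} [Fintype ι] [DecidableEq ι] (g : ι → Bool → ℝ) :
    ∑ f : ι → Bool, ∏ i, g i (f i) = ∏ i, (g i true + g i false) := by
  rw [← Fintype.prod_sum g]
  exact Finset.prod_congr rfl fun i _ => by rw [Fintype.sum_bool]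

lemma W_eq (p : ℝ) (f : PE n → Bool) :
    W n p f = p ^ (univ.filter (fun i => f i = true)).card *
      (1 - p) ^ (n.choose 2 - (univ.filter (fun i => f i = true)).card) := by
  rw [W, Finset.prod_ite _ _, Finset.prod_const, Finset.prod_const]
  congr 1
  congr 1
  have := Finset.card_filter_add_card_filter_not
    (s := (univ : Finset (PE n))) (p := fun i => f i = true)
  rw [Finset.card_univ, card_PE] at this
  omega

lemma sum_W (p : ℝ) : ∑ f : PE n → Bool, W n p f = 1 := by
  have h := sum_prod_bool (fun (i : PE n) (b : Bool) => if b then p else 1 - p)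
  simp only [if_true, if_false] at h
  simp only [W]
  rw [h]
  simp

lemma mgf (p y : ℝ) (S : Finset (PE n)) :
    ∑ f : PE n → Bool, W n p f * y ^ (S.filter (fun i => f i = true)).card
      = (1 - p + p * y) ^ S.card := by
  have key : ∀ f : PE n → Bool,
      W n p f * y ^ (S.filter (fun i => f i = true)).card
        = ∏ i, ((if f i then p else 1 - p) * (if i ∈ S ∧ f i = true then y else 1)) := by
    intro f
    rw [Finset.prod_mul_distrib]
    congr 1
    rw [Finset.prod_ite _ _, Finset.prod_const, Finset.prod_const, one_pow, mul_one]
    congr 2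
    ext i
    simp [Finset.mem_filter, and_comm]
  have h := sum_prod_bool
    (fun (i : PE n) (b : Bool) => (if b then p else 1 - p) * (if i ∈ S ∧ b = true then y else 1))
  simp only at h
  rw [Finset.sum_congr rfl fun f _ => key f, h]
  have step : ∏ x : PE n, (if x ∈ S then 1 - p + p * y else 1) = (1 - p + p * y) ^ S.card := by
    rw [Finset.prod_ite_mem, Finset.univ_inter, Finset.prod_const]
  rw [← step]
  refine Finset.prod_congr rfl fun i _ => ?_
  by_cases hi : i ∈ S <;> simp [hi] <;> ring

def condAB (A B : Set (Fin n)) (i : PE n) : Prop :=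
  (i.1.1 ∈ A ∧ i.1.2 ∈ B) ∨ (i.1.1 ∈ B ∧ i.1.2 ∈ A)

noncomputable def SAB (A B : Set (Fin n)) : Finset (PE n) :=
  univ.filter (condAB A B)

lemma natcard_SAB_filter (A B : Set (Fin n)) (q : PE n → Prop) :
    Nat.card {i : PE n // condAB A B i ∧ q i}
      = ((SAB A B).filter (fun i => q i)).card := by
  rw [Nat.card_eq_fintype_card, Fintype.card_subtype]
  congr 1
  ext i
  simp only [Finset.mem_filter, Finset.mem_univ, true_and, SAB]

lemma eCnt_card (A B : Set (Fin n)) (hAB : Disjoint A B) (R : Fin n → Fin n → Prop)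
    (hsym : ∀ a b, R a b → R b a) :
    Nat.card {x : Fin n × Fin n // x.1 ∈ A ∧ x.2 ∈ B ∧ R x.1 x.2}
      = Nat.card {i : PE n // condAB A B i ∧ R i.1.1 i.1.2} := by
  rw [Nat.card_eq_fintype_card, Nat.card_eq_fintype_card, Fintype.card_subtype,
    Fintype.card_subtype]
  refine Finset.card_bij'
    (i := fun x hx => if h : x.1 < x.2 then (⟨x, h⟩ : PE n) else
      ⟨(x.2, x.1), lt_of_le_of_ne (not_lt.mp h) (by
        simp only [Finset.mem_filter, Finset.mem_univ, true_and] at hx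
        intro he
        have he' : x.2 = x.1 := he
        exact Set.disjoint_left.mp hAB hx.1 (he' ▸ hx.2.1))⟩)
    (j := fun b hb => if b.1.1 ∈ A then (b.1.1, b.1.2) else (b.1.2, b.1.1))
    ?_ ?_ ?_ ?_
  · intro x hx
    replace hx := (Finset.mem_filter.mp hx).2
    split_ifs with h <;> refine Finset.mem_filter.mpr ⟨Finset.mem_univ _, ?_⟩
    · exact ⟨Or.inl ⟨hx.1, hx.2.1⟩, hx.2.2⟩
    · exact ⟨Or.inr ⟨hx.2.1, hx.1⟩, hsym _ _ hx.2.2⟩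
  · intro b hb
    replace hb := (Finset.mem_filter.mp hb).2
    split_ifs with h <;> refine Finset.mem_filter.mpr ⟨Finset.mem_univ _, ?_⟩
    · rcases hb.1 with ⟨_, h2⟩ | ⟨h1, _⟩
      · exact ⟨h, h2, hb.2⟩
      · exact absurd (Set.disjoint_left.mp hAB h h1) not_false
    · rcases hb.1 with ⟨h1, _⟩ | ⟨h1, h2⟩
      · exact absurd h1 h
      · exact ⟨h2, h1, hsym _ _ hb.2⟩
  · intro x hx
    simp only [Finset.mem_filter, Finset.mem_univ, true_and] at hx
    by_cases h : x.1 < x.2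
    · have hA : x.1 ∈ A := hx.1
      simp [dif_pos h, hA]
    · have hnA : x.2 ∉ A := fun hh => Set.disjoint_left.mp hAB hh hx.2.1
      simp [dif_neg h, hnA]
  · intro b hb
    simp only [Finset.mem_filter, Finset.mem_univ, true_and] at hb
    have hlt : b.1.1 < b.1.2 := b.2
    by_cases h : b.1.1 ∈ A
    · simp only [if_pos h]
      simp [hlt]
    · simp only [if_neg h]
      have : ¬ ((b.1.2, b.1.1).1 < (b.1.2, b.1.1).2) := by simpa using hlt.le
      simp [this]

lemma card_SAB (A B : Set (Fin n)) (hAB : Disjoint A B) :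
    (SAB A B).card = Nat.card A * Nat.card B := by
  have h := eCnt_card A B hAB (fun a b => a ≠ b) (fun a b h => h.symm)
  have h2 : Nat.card {i : PE n // condAB A B i ∧ (fun a b => a ≠ b) i.1.1 i.1.2}
      = (SAB A B).card := by
    rw [Nat.card_eq_fintype_card, Fintype.card_subtype]
    congr 1
    ext i
    simp only [Finset.mem_filter, Finset.mem_univ, true_and, SAB]
    exact and_iff_left i.2.ne
  rw [h2] at h
  rw [← h, ← Nat.card_prod]
  refine Nat.card_congr ((Equiv.subtypeEquivRight (fun x => ?_)).trans
    (Equiv.subtypeProdEquivProd))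
  constructor
  · rintro ⟨h1, h2, _⟩; exact ⟨h1, h2⟩
  · rintro ⟨h1, h2⟩; exact ⟨h1, h2, fun he => Set.disjoint_left.mp hAB h1 (he ▸ h2)⟩

lemma chernoff (p ε : ℝ) (hp0 : 0 ≤ p) (hp1 : p ≤ 1) (hε : 0 < ε) (S : Finset (PE n)) (t : ℝ)
    (ht : (1 + ε) * S.card * p ≤ t) :
    ∑ f : PE n → Bool, (if t < ((S.filter (fun i => f i = true)).card : ℝ) then W n p f else 0)
      ≤ Real.exp (-(((1 + ε) * Real.log (1 + ε) - ε) * (S.card * p))) := by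
  set y : ℝ := 1 + ε with hy_def
  have hy : 1 < y := by simp only [hy_def]; linarith
  have hy0 : (0 : ℝ) < y := by linarith
  set c : ℝ := (y ^ t)⁻¹ with hc_def
  have hc0 : 0 < c := by
    rw [hc_def]
    exact inv_pos.mpr (Real.rpow_pos_of_pos hy0 t)
  have hterm : ∀ f : PE n → Bool,
      (if t < ((S.filter (fun i => f i = true)).card : ℝ) then W n p f else 0)
        ≤ c * (W n p f * y ^ (S.filter (fun i => f i = true)).card) := by
    intro f
    set X := (S.filter (fun i => f i = true)).card with hX
    have hWn := W_nonneg hp0 hp1 f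
    split_ifs with h
    · have h1 : y ^ t ≤ y ^ (X : ℝ) :=
        Real.rpow_le_rpow_of_exponent_le hy.le h.le
      rw [Real.rpow_natCast] at h1
      calc W n p f = c * (W n p f * y ^ t) := by
            rw [hc_def]; field_simp
        _ ≤ c * (W n p f * y ^ X) := by
            apply mul_le_mul_of_nonneg_left _ hc0.le
            exact mul_le_mul_of_nonneg_left h1 hWn
    · positivity
  calc ∑ f : PE n → Bool, (if t < ((S.filter (fun i => f i = true)).card : ℝ) then W n p f else 0)
      ≤ ∑ f : PE n → Bool, c * (W n p f * y ^ (S.filter (fun i => f i = true)).card) :=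
        Finset.sum_le_sum fun f _ => hterm f
    _ = c * (1 - p + p * y) ^ S.card := by rw [← Finset.mul_sum, mgf]
    _ = c * (1 + p * ε) ^ S.card := by rw [hy_def]; ring_nf
    _ ≤ c * Real.exp (p * ε * S.card) := by
        apply mul_le_mul_of_nonneg_left _ hc0.le
        have h1 : 1 + p * ε ≤ Real.exp (p * ε) := by
          have := Real.add_one_le_exp (p * ε); linarith
        have h0 : (0 : ℝ) ≤ 1 + p * ε := by positivity
        calc (1 + p * ε) ^ S.card ≤ Real.exp (p * ε) ^ S.card := pow_le_pow_left₀ h0 h1 _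
          _ = Real.exp (p * ε * S.card) := by
              rw [← Real.exp_nat_mul]; ring_nf
    _ = Real.exp (p * ε * S.card - t * Real.log y) := by
        rw [hc_def, Real.rpow_def_of_pos hy0, ← Real.exp_neg, ← Real.exp_add]
        ring_nf
    _ ≤ Real.exp (-(((1 + ε) * Real.log (1 + ε) - ε) * (S.card * p))) := by
        apply Real.exp_le_exp.mpr
        have hlog : 0 < Real.log y := Real.log_pos hy
        have h2 : (1 + ε) * S.card * p * Real.log y ≤ t * Real.log y :=
          mul_le_mul_of_nonneg_right ht hlog.le
        rw [hy_def] at *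
        nlinarith [h2]

lemma edgeCnt_gOfFun (f : PE n → Bool) :
    edgeCnt (gOfFun f) = (univ.filter (fun i : PE n => f i = true)).card := by
  rw [edgeCnt_eq]
  have h : Nat.card {i : PE n // (gOfFun f).Adj i.1.1 i.1.2}
      = Nat.card {i : PE n // f i = true} :=
    Nat.card_congr (Equiv.subtypeEquivRight (fun i => gOfFun_adj f i))
  rw [h, Nat.card_eq_fintype_card, Fintype.card_subtype]

lemma weight_eq (p : ℝ) (f : PE n → Bool) :
    p ^ edgeCnt (gOfFun f) * (1 - p) ^ (n.choose 2 - edgeCnt (gOfFun f)) = W n p f := by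
  rw [edgeCnt_gOfFun, W_eq]

lemma gnpProb_eq (p : ℝ) (𝒜 : Set (SimpleGraph (Fin n))) :
    gnpProb n p 𝒜 = ∑ f : PE n → Bool, (if gOfFun f ∈ 𝒜 then W n p f else 0) := by
  rw [gnpProb, ← Equiv.sum_comp (gEquiv (n := n)).symm
    (fun G => 𝒜.indicator (fun G => p ^ edgeCnt G * (1 - p) ^ (n.choose 2 - edgeCnt G)) G)]
  refine Finset.sum_congr rfl fun f _ => ?_
  have hG : (gEquiv (n := n)).symm f = gOfFun f := rfl
  rw [hG, Set.indicator_apply]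
  split_ifs with h
  · exact weight_eq p f
  · rfl

lemma gnpProb_compl (p : ℝ) (P : SimpleGraph (Fin n) → Prop) :
    gnpProb n p {G | P G} = 1 - gnpProb n p {G | ¬ P G} := by
  rw [gnpProb_eq, gnpProb_eq, eq_sub_iff_add_eq, ← sum_W (n := n) p,
    ← Finset.sum_add_distrib]
  refine Finset.sum_congr rfl fun f _ => ?_
  by_cases h : P (gOfFun f) <;> simp [h]

lemma eCnt_gOfFun (A B : Set (Fin n)) (hAB : Disjoint A B) (f : PE n → Bool) :
    eCnt (gOfFun f).Adj A B = ((SAB A B).filter (fun i => f i = true)).card := by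
  rw [eCnt, eCnt_card A B hAB _ (fun a b hab => hab.symm)]
  have h1 : Nat.card {i : PE n // condAB A B i ∧ (gOfFun f).Adj i.1.1 i.1.2}
      = Nat.card {i : PE n // condAB A B i ∧ f i = true} :=
    Nat.card_congr (Equiv.subtypeEquivRight
      (fun i => and_congr_right fun _ => gOfFun_adj f i))
  rw [h1, Nat.card_eq_fintype_card, Fintype.card_subtype]
  congr 1
  ext i
  simp only [Finset.mem_filter, Finset.mem_univ, true_and, SAB]

lemma sum_q_sets (q : ℝ) : ∑ A : Set (Fin n), q ^ (Nat.card A) = (q + 1) ^ n := by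
  rw [← Equiv.sum_comp (Fintype.finsetEquivSet (α := Fin n))
    (fun A : Set (Fin n) => q ^ (Nat.card A))]
  have h : ∀ s : Finset (Fin n),
      q ^ (Nat.card (Fintype.finsetEquivSet s)) = q ^ s.card := by
    intro s
    congr 1
    simp only [Fintype.finsetEquivSet, Equiv.coe_fn_mk]
    rw [Nat.card_coe_set_eq, Set.ncard_coe_finset]
  rw [Finset.sum_congr rfl fun s _ => h s]
  rw [show (univ : Finset (Finset (Fin n))) = (univ : Finset (Fin n)).powerset from
    Finset.powerset_univ.symm]
  rw [Finset.sum_powerset]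
  rw [add_pow]
  rw [Finset.card_univ, Fintype.card_fin]
  refine Finset.sum_congr rfl fun j hj => ?_
  have : ∀ t ∈ Finset.powersetCard j (univ : Finset (Fin n)), q ^ t.card = q ^ j := by
    intro t ht
    rw [(Finset.mem_powersetCard.mp ht).2]
  rw [Finset.sum_congr rfl this, Finset.sum_const, Finset.card_powersetCard,
    Finset.card_univ, Fintype.card_fin]
  simp [mul_comm]

end GnpAux

open GnpAux in
/-- For every `ε > 0` there is `C > 0` such that for every edge probability `p = p(n)`, a.a.s.
in `G_{n,p}` every pair of disjoint vertex sets `A, B` with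
`|A||B|p ≥ C log(n) max(|A|,|B|)` satisfies `e(A,B) ≤ (1+ε)|A||B|p`. -/
theorem aas_upper_bound_between_pairs (ε : ℝ) (hε : 0 < ε) :
    ∃ C : ℝ, 0 < C ∧
      ∀ p : ℕ → ℝ, (∀ n, 0 ≤ p n ∧ p n ≤ 1) →
        AAS p (fun n Gnp =>
          ∀ A B : Set (Fin n), Disjoint A B →
            C * Real.log n * ((max (Nat.card A) (Nat.card B) : ℕ) : ℝ) ≤
              (Nat.card A : ℝ) * (Nat.card B : ℝ) * p n →
            (eCnt Gnp.Adj A B : ℝ) ≤ (1 + ε) * (Nat.card A : ℝ) * (Nat.card B : ℝ) * p n) := by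
  classical
  set h : ℝ := (1 + ε) * Real.log (1 + ε) - ε with hh_def
  have h1ε : (0 : ℝ) < 1 + ε := by linarith
  have hh : 0 < h := by
    have hx0 : 0 < ε / (1 + ε) := by positivity
    have h2 := Real.add_one_lt_exp (x := -(ε / (1 + ε))) (by linarith)
    have h3 : 1 - ε / (1 + ε) = 1 / (1 + ε) := by field_simp; ring
    have h4 : (1 : ℝ) / (1 + ε) < Real.exp (-(ε / (1 + ε))) := by linarith
    have h5 : Real.exp (ε / (1 + ε)) < 1 + ε := by
      have he : Real.exp (ε / (1 + ε)) = (Real.exp (-(ε / (1 + ε))))⁻¹ := by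
        rw [← Real.exp_neg, neg_neg]
      rw [he, inv_lt_comm₀ (Real.exp_pos _) h1ε]
      calc (1 + ε)⁻¹ = 1 / (1 + ε) := (one_div _).symm
        _ < Real.exp (-(ε / (1 + ε))) := h4
    have h6 : ε / (1 + ε) < Real.log (1 + ε) :=
      (Real.lt_log_iff_exp_lt h1ε).mpr h5
    have h7 : ε < (1 + ε) * Real.log (1 + ε) := by
      have := mul_lt_mul_of_pos_left h6 h1ε
      rw [mul_div_cancel₀] at this
      · linarith
      · linarith
    simp only [hh_def]; linarith
  refine ⟨4 / h, by positivity, ?_⟩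
  intro p hp
  rw [AAS]
  set Pr : (n : ℕ) → SimpleGraph (Fin n) → Prop := fun n Gnp =>
    ∀ A B : Set (Fin n), Disjoint A B →
      4 / h * Real.log n * ((max (Nat.card A) (Nat.card B) : ℕ) : ℝ) ≤
        (Nat.card A : ℝ) * (Nat.card B : ℝ) * p n →
      (eCnt Gnp.Adj A B : ℝ) ≤ (1 + ε) * (Nat.card A : ℝ) * (Nat.card B : ℝ) * p n
    with hPr_def
  set err : ℕ → ℝ := fun n => ((1 + ((n : ℝ) ^ 2)⁻¹) ^ n - 1) ^ 2 with herr_def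
  have h0 : ∀ n : ℕ, 0 ≤ gnpProb n (p n) {G | ¬ Pr n G} := by
    intro n
    rw [gnpProb_eq]
    refine Finset.sum_nonneg fun f _ => ?_
    split_ifs
    · exact W_nonneg (hp n).1 (hp n).2 f
    · exact le_refl 0
  have key : ∀ n : ℕ, 0 < n → gnpProb n (p n) {G | ¬ Pr n G} ≤ err n := by
    intro n hn
    obtain ⟨hp0, hp1⟩ := hp n
    have hn1 : (1 : ℝ) ≤ (n : ℝ) := by exact_mod_cast hn
    have hnR : (0 : ℝ) < (n : ℝ) := by linarith
    set q : ℝ := ((n : ℝ) ^ 2)⁻¹ with hq_def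
    have hq0 : (0 : ℝ) ≤ q := by positivity
    have hlogn : 0 ≤ Real.log n := Real.log_nonneg hn1
    set Bad : Set (Fin n) → Set (Fin n) → (PE n → Bool) → Prop := fun A B f =>
      Disjoint A B ∧
        4 / h * Real.log n * ((max (Nat.card A) (Nat.card B) : ℕ) : ℝ) ≤
          (Nat.card A : ℝ) * (Nat.card B : ℝ) * p n ∧
        (1 + ε) * (Nat.card A : ℝ) * (Nat.card B : ℝ) * p n < (eCnt (gOfFun f).Adj A B : ℝ)
      with hBad_def
    have hnn : ∀ f : PE n → Bool, ∀ AB : Set (Fin n) × Set (Fin n),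
        (0 : ℝ) ≤ if Bad AB.1 AB.2 f then W n (p n) f else 0 := by
      intro f AB
      split_ifs
      exacts [W_nonneg hp0 hp1 f, le_refl 0]
    have stepA : gnpProb n (p n) {G | ¬ Pr n G} ≤
        ∑ AB : Set (Fin n) × Set (Fin n),
          ∑ f : PE n → Bool, (if Bad AB.1 AB.2 f then W n (p n) f else 0) := by
      rw [gnpProb_eq]
      refine le_trans (Finset.sum_le_sum (fun f _ => ?_)) (le_of_eq Finset.sum_comm)
      split_ifs with hgf
      · simp only [Set.mem_setOf_eq, hPr_def] at hgf
        push_neg at hgf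
        obtain ⟨A, B, h1, h2, h3⟩ := hgf
        refine le_trans (le_of_eq (if_pos (⟨h1, h2, h3⟩ : Bad A B f)).symm)
          (Finset.single_le_sum (f := fun AB : Set (Fin n) × Set (Fin n) =>
            if Bad AB.1 AB.2 f then W n (p n) f else 0) (fun AB _ => hnn f AB)
            (Finset.mem_univ (A, B)))
      · exact Finset.sum_nonneg fun AB _ => hnn f AB
    have stepB : ∀ AB : Set (Fin n) × Set (Fin n),
        ∑ f : PE n → Bool, (if Bad AB.1 AB.2 f then W n (p n) f else 0) ≤
          (if AB.1 = ∅ ∨ AB.2 = ∅ then 0 else q ^ (Nat.card AB.1 + Nat.card AB.2)) := by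
      rintro ⟨A, B⟩
      dsimp only
      by_cases hAe : A = ∅ ∨ B = ∅
      · rw [if_pos hAe]
        have hzero : ∀ f : PE n → Bool, ¬ Bad A B f := by
          intro f hbad
          obtain ⟨hD, hcond, hlt⟩ := hbad
          have hE : eCnt (gOfFun f).Adj A B = 0 := by
            rw [eCnt]
            rcases hAe with rfl | rfl
            · have hie : IsEmpty {x : Fin n × Fin n //
                  x.1 ∈ (∅ : Set (Fin n)) ∧ x.2 ∈ B ∧ (gOfFun f).Adj x.1 x.2} :=
                ⟨fun x => absurd x.2.1 (Set.notMem_empty _)⟩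
              exact @Nat.card_of_isEmpty _ hie
            · have hie : IsEmpty {x : Fin n × Fin n //
                  x.1 ∈ A ∧ x.2 ∈ (∅ : Set (Fin n)) ∧ (gOfFun f).Adj x.1 x.2} :=
                ⟨fun x => absurd x.2.2.1 (Set.notMem_empty _)⟩
              exact @Nat.card_of_isEmpty _ hie
          rw [hE] at hlt
          have hge : (0 : ℝ) ≤ (1 + ε) * (Nat.card A : ℝ) * (Nat.card B : ℝ) * p n :=
            mul_nonneg (mul_nonneg (mul_nonneg (by linarith) (Nat.cast_nonneg _))
              (Nat.cast_nonneg _)) hp0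
          simp only [Nat.cast_zero] at hlt
          linarith
        rw [Finset.sum_congr rfl fun f _ => if_neg (hzero f), Finset.sum_const_zero]
      · push_neg at hAe
        rw [if_neg (not_or.mpr ⟨hAe.1.ne_empty, hAe.2.ne_empty⟩)]
        by_cases hDc : Disjoint A B ∧
            4 / h * Real.log n * ((max (Nat.card A) (Nat.card B) : ℕ) : ℝ) ≤
              (Nat.card A : ℝ) * (Nat.card B : ℝ) * p n
        · obtain ⟨hD, hcond⟩ := hDc
          have hrw : ∀ f : PE n → Bool, (if Bad A B f then W n (p n) f else 0)
              = (if (1 + ε) * (Nat.card A : ℝ) * (Nat.card B : ℝ) * p n <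
                  (((SAB A B).filter (fun i => f i = true)).card : ℝ)
                 then W n (p n) f else 0) := by
            intro f
            refine if_congr ?_ rfl rfl
            constructor
            · rintro ⟨_, _, h3⟩
              rwa [eCnt_gOfFun A B hD f] at h3
            · intro h3
              exact ⟨hD, hcond, by rwa [← eCnt_gOfFun A B hD f] at h3⟩
          rw [Finset.sum_congr rfl fun f _ => hrw f]
          have hcher := chernoff (p n) ε hp0 hp1 hε (SAB A B)
            ((1 + ε) * (Nat.card A : ℝ) * (Nat.card B : ℝ) * p n)
            (le_of_eq (by rw [card_SAB A B hD]; push_cast; ring))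
          refine le_trans hcher ?_
          rw [← hh_def, card_SAB A B hD]
          have hM : (Nat.card A : ℝ) + (Nat.card B : ℝ) ≤
              2 * ((max (Nat.card A) (Nat.card B) : ℕ) : ℝ) := by
            have h1 := le_max_left (Nat.card A) (Nat.card B)
            have h2 := le_max_right (Nat.card A) (Nat.card B)
            have h1' : ((Nat.card A : ℕ) : ℝ) ≤ ((max (Nat.card A) (Nat.card B) : ℕ) : ℝ) := by
              exact_mod_cast h1
            have h2' : ((Nat.card B : ℕ) : ℝ) ≤ ((max (Nat.card A) (Nat.card B) : ℕ) : ℝ) := by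
              exact_mod_cast h2
            linarith
          have t0 : 4 * (Real.log n * ((max (Nat.card A) (Nat.card B) : ℕ) : ℝ))
              ≤ h * ((Nat.card A : ℝ) * (Nat.card B : ℝ) * p n) := by
            calc 4 * (Real.log n * ((max (Nat.card A) (Nat.card B) : ℕ) : ℝ))
                = h * (4 / h * Real.log n * ((max (Nat.card A) (Nat.card B) : ℕ) : ℝ)) := by
                  field_simp
              _ ≤ h * ((Nat.card A : ℝ) * (Nat.card B : ℝ) * p n) :=
                  mul_le_mul_of_nonneg_left hcond hh.le
          have t3 : ((Nat.card A : ℝ) + (Nat.card B : ℝ)) * Real.log n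
              ≤ 2 * ((max (Nat.card A) (Nat.card B) : ℕ) : ℝ) * Real.log n :=
            mul_le_mul_of_nonneg_right hM hlogn
          have hls : 2 * ((Nat.card A : ℝ) + (Nat.card B : ℝ)) * Real.log n
              ≤ h * ((Nat.card A : ℝ) * (Nat.card B : ℝ) * p n) := by linarith [t0, t3]
          calc Real.exp (-(h * (((Nat.card A * Nat.card B : ℕ) : ℝ) * p n)))
              ≤ Real.exp (-(((2 * (Nat.card A + Nat.card B) : ℕ) : ℝ) * Real.log n)) := by
                apply Real.exp_le_exp.mpr
                push_cast
                nlinarith [hls]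
            _ = q ^ (Nat.card A + Nat.card B) := by
                rw [Real.exp_neg, Real.exp_nat_mul, Real.exp_log hnR, hq_def,
                  inv_pow, ← pow_mul]
        · have hzero : ∀ f : PE n → Bool, ¬ Bad A B f := fun f hb => hDc ⟨hb.1, hb.2.1⟩
          have hqq : (0 : ℝ) ≤ q ^ (Nat.card A + Nat.card B) := by positivity
          rw [Finset.sum_congr rfl fun f _ => if_neg (hzero f), Finset.sum_const_zero]
          exact hqq
    have stepC : ∑ AB : Set (Fin n) × Set (Fin n),
        (if AB.1 = ∅ ∨ AB.2 = ∅ then (0:ℝ) else q ^ (Nat.card AB.1 + Nat.card AB.2))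
          = err n := by
      have hsplit : ∀ AB : Set (Fin n) × Set (Fin n),
          (if AB.1 = ∅ ∨ AB.2 = ∅ then (0:ℝ) else q ^ (Nat.card AB.1 + Nat.card AB.2))
            = (if AB.1 = ∅ then 0 else q ^ Nat.card AB.1) *
              (if AB.2 = ∅ then 0 else q ^ Nat.card AB.2) := by
        rintro ⟨A, B⟩
        by_cases h1 : A = ∅ <;> by_cases h2 : B = ∅ <;> simp [h1, h2, pow_add]
      have hfact : (∑ AB : Set (Fin n) × Set (Fin n),
          (if AB.1 = ∅ then (0:ℝ) else q ^ Nat.card AB.1) *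
            (if AB.2 = ∅ then (0:ℝ) else q ^ Nat.card AB.2))
            = (∑ A : Set (Fin n), if A = ∅ then (0:ℝ) else q ^ Nat.card A) *
              (∑ B : Set (Fin n), if B = ∅ then (0:ℝ) else q ^ Nat.card B) := by
        rw [Fintype.sum_mul_sum]
        exact Fintype.sum_prod_type _
      rw [Finset.sum_congr rfl fun AB _ => hsplit AB, hfact]
      have hS1 : ∑ A : Set (Fin n), (if A = ∅ then (0:ℝ) else q ^ Nat.card A)
          = (1 + q) ^ n - 1 := by
        have hterm : ∀ A : Set (Fin n), (if A = ∅ then (0:ℝ) else q ^ Nat.card A)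
            = q ^ Nat.card A - (if A = ∅ then q ^ Nat.card A else 0) := by
          intro A
          split_ifs <;> simp
        rw [Finset.sum_congr rfl fun A _ => hterm A, Finset.sum_sub_distrib, sum_q_sets,
          Finset.sum_ite_eq' Finset.univ (∅ : Set (Fin n)) (fun A => q ^ Nat.card A)]
        have hcard0 : Nat.card (∅ : Set (Fin n)) = 0 := by simp
        simp [hcard0, add_comm]
      rw [hS1, herr_def]
      ring
    calc gnpProb n (p n) {G | ¬ Pr n G}
        ≤ ∑ AB : Set (Fin n) × Set (Fin n),
            ∑ f : PE n → Bool, (if Bad AB.1 AB.2 f then W n (p n) f else 0) := stepA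
      _ ≤ ∑ AB : Set (Fin n) × Set (Fin n),
            (if AB.1 = ∅ ∨ AB.2 = ∅ then (0:ℝ) else q ^ (Nat.card AB.1 + Nat.card AB.2)) :=
          Finset.sum_le_sum fun AB _ => stepB AB
      _ = err n := stepC
  have hu_lim : Tendsto (fun n : ℕ => (1 + ((n : ℝ) ^ 2)⁻¹) ^ n) atTop (nhds 1) := by
    have hupper : Tendsto (fun n : ℕ => Real.exp ((n : ℝ)⁻¹)) atTop (nhds 1) := by
      have := (Real.continuous_exp.tendsto 0).comp tendsto_inv_atTop_nhds_zero_nat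
      simpa [Function.comp_def] using this
    refine tendsto_of_tendsto_of_tendsto_of_le_of_le' tendsto_const_nhds hupper ?_ ?_
    · exact Filter.Eventually.of_forall fun n =>
        one_le_pow₀ (le_add_of_nonneg_right (by positivity))
    · filter_upwards [eventually_ge_atTop 1] with n hn
      have hn1 : (1 : ℝ) ≤ (n : ℝ) := by exact_mod_cast hn
      have hne : (n : ℝ) ≠ 0 := by linarith
      have h1 : (1 + ((n : ℝ) ^ 2)⁻¹) ≤ Real.exp (((n : ℝ) ^ 2)⁻¹) := by
        have := Real.add_one_le_exp (((n : ℝ) ^ 2)⁻¹)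
        linarith
      calc (1 + ((n : ℝ) ^ 2)⁻¹) ^ n ≤ Real.exp (((n : ℝ) ^ 2)⁻¹) ^ n :=
            pow_le_pow_left₀ (by positivity) h1 n
        _ = Real.exp ((n : ℕ) * ((n : ℝ) ^ 2)⁻¹) := (Real.exp_nat_mul _ n).symm
        _ = Real.exp ((n : ℝ)⁻¹) := by
            congr 1
            rw [pow_two, mul_inv, ← mul_assoc, mul_inv_cancel₀ hne, one_mul]
  have herr0 : Tendsto err atTop (nhds 0) := by
    have h2 := (hu_lim.sub (tendsto_const_nhds (x := (1:ℝ)))).pow 2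
    have h3 : ((1:ℝ) - 1) ^ 2 = 0 := by norm_num
    rw [h3] at h2
    exact h2
  have hbad : Tendsto (fun n => gnpProb n (p n) {G | ¬ Pr n G}) atTop (nhds 0) := by
    refine tendsto_of_tendsto_of_tendsto_of_le_of_le' tendsto_const_nhds herr0
      (Filter.Eventually.of_forall h0) ?_
    filter_upwards [eventually_gt_atTop 0] with n hn
    exact key n hn
  have hfinal : ∀ n, gnpProb n (p n) {G | Pr n G} = 1 - gnpProb n (p n) {G | ¬ Pr n G} :=
    fun n => gnpProb_compl (p n) (Pr n)
  have hlim : Tendsto (fun n => 1 - gnpProb n (p n) {G | ¬ Pr n G}) atTop (nhds 1) := by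
    have := (tendsto_const_nhds (x := (1:ℝ)) (f := (atTop : Filter ℕ))).sub hbad
    simpa using this
  exact hlim.congr fun n => (hfinal n).symm
end
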